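/- Let (M, φ) be a size pair. For every ε > 0, the reduced size function ℓ*_{(M,φ)} has at most finitely many proper cornerpoints (counted with multiplicity) in the region {(x,y) ∈ ℝ² : x + ε < y}. -/

import Mathlib

open Set Topology
open scoped ENNReal

noncomputable def rsf {M : Type*} [TopologicalSpace M] (φ : M → ℝ) (x y : ℝ) : ℕ :=
  Set.ncard {C : Set M | ∃ P, φ P ≤ x ∧ C = connectedComponentIn {Q | φ Q ≤ y} P}

noncomputable def mult {M : Type*} [TopologicalSpace M] (φ : M → ℝ) (p : ℝ × ℝ) : ℤ :=
  sInf {z : ℤ | ∃ ε : ℝ, 0 < ε ∧ p.1 + ε < p.2 - ε ∧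
    z = (rsf φ (p.1 + ε) (p.2 - ε) : ℤ) - (rsf φ (p.1 - ε) (p.2 - ε) : ℤ)
      - (rsf φ (p.1 + ε) (p.2 + ε) : ℤ) + (rsf φ (p.1 - ε) (p.2 + ε) : ℤ)}

noncomputable def multInf {M : Type*} [TopologicalSpace M] (φ : M → ℝ) (k : ℝ) : ℤ :=
  sInf {z : ℤ | ∃ ε : ℝ, 0 < ε ∧ k + ε < 1 / ε ∧
    z = (rsf φ (k + ε) (1 / ε) : ℤ) - (rsf φ (k - ε) (1 / ε) : ℤ)}

open scoped Classical in
noncomputable def eDist (p q : ℝ × EReal) : ℝ≥0∞ :=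
  if p.2 = ⊤ ∧ q.2 = ⊤ then ENNReal.ofReal |p.1 - q.1|
  else if p.2 = ⊤ ∨ q.2 = ⊤ then ⊤
  else ENNReal.ofReal (min (max |p.1 - q.1| |p.2.toReal - q.2.toReal|)
    (max ((p.2.toReal - p.1) / 2) ((q.2.toReal - q.1) / 2)))

def IsRepSeq {M : Type*} [TopologicalSpace M] (φ : M → ℝ) (a : ℕ → ℝ × EReal) : Prop :=
  (∃ k : ℝ, a 0 = (k, ⊤) ∧ 0 < multInf φ k) ∧
  (∀ i : ℕ, 0 < i →
    (∃ x y : ℝ, a i = (x, (y : EReal)) ∧ x < y ∧ 0 < mult φ (x, y)) ∨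
    (∃ x : ℝ, a i = (x, (x : EReal)))) ∧
  (∀ x y : ℝ, x < y → 0 < mult φ (x, y) →
    Set.ncard {i : ℕ | a i = (x, (y : EReal))} = (mult φ (x, y)).toNat) ∧
  {i : ℕ | ∃ x : ℝ, a i = (x, (x : EReal))}.Infinite

noncomputable def dMatchSeq (a b : ℕ → ℝ × EReal) : ℝ≥0∞ :=
  ⨅ σ : {σ : ℕ → ℕ // Function.Bijective σ}, ⨆ i : ℕ, eDist (a i) (b (σ.1 i))

noncomputable def dMatch {M N : Type*} [TopologicalSpace M] [TopologicalSpace N]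
    (φ : M → ℝ) (ψ : N → ℝ) : ℝ≥0∞ :=
  sInf {s : ℝ≥0∞ | ∃ a b, IsRepSeq φ a ∧ IsRepSeq ψ b ∧ s = dMatchSeq a b}

/-!
A cornerpoint `(x, y)` of positive multiplicity forces a jump of `s ↦ ℓ*(s, c)` at `s = x` for
every `c ∈ (x, y)`, and of `s ↦ ℓ*(b, s)` at `s = y` for every `b ∈ (x, y)`; this follows from the
rectangle inequality `ℓ*(a, c) + ℓ*(b, d) ≤ ℓ*(b, c) + ℓ*(a, d)` for `a ≤ b < c ≤ d`, which holds
because every component of `{φ ≤ c}` lies in a single component of `{φ ≤ d}`. For `b < c` the first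
function is monotone and finite-valued on `(-∞, b]`, the second antitone on `[c, ∞)`, since by
compactness and local connectedness `{φ ≤ b}` meets only finitely many components of `{φ ≤ c}`.
Hence only finitely many cornerpoints lie in `(-∞, b) × (c, ∞)`. All cornerpoints lie in
`[min φ, max φ]²`, and around any point `p` with `p.1 + ε ≤ p.2` such a quadrant is a neighbourhood,
so the cornerpoints above the line `y = x + ε` have no accumulation point.
-/

open Filter

theorem ncard_image_add_ncard_le {β γ : Type*} {S T : Set β} (hTS : T ⊆ S) (hS : S.Finite)
    (g : β → γ) : (g '' S).ncard + T.ncard ≤ S.ncard + (g '' T).ncard := by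
  have hgS : (g '' S).ncard ≤ (g '' (S \ T)).ncard + (g '' T).ncard := by
    rw [← sdiff_union_of_subset hTS, image_union, sdiff_union_of_subset hTS]
    exact ncard_union_le _ _
  have hST := ncard_sdiff_add_ncard_of_subset hTS hS
  have hdiff : (g '' (S \ T)).ncard ≤ (S \ T).ncard := ncard_image_le hS.sdiff
  omega

theorem ncard_image_add_ncard_image_le {α β γ : Type*} {A B : Set α} (hAB : A ⊆ B)
    {u : α → β} {v : α → γ} (huv : ∀ P ∈ B, ∀ Q ∈ B, u P = u Q → v P = v Q)
    (hu : (u '' B).Finite) : (v '' B).ncard + (u '' A).ncard ≤ (u '' B).ncard + (v '' A).ncard := by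
  rcases isEmpty_or_nonempty α with hα | hα
  · simp [eq_empty_of_isEmpty]
  have hv : ∀ X ⊆ B, v '' X = (fun D => v (Function.invFunOn u B D)) '' (u '' X) := by
    intro X hX
    rw [image_image]
    refine image_congr fun P hP => ?_
    have hPu : ∃ Q ∈ B, u Q = u P := ⟨P, hX hP, rfl⟩
    exact huv _ (hX hP) _ (Function.invFunOn_mem hPu) (Function.invFunOn_eq hPu).symm
  rw [hv B subset_rfl, hv A hAB]
  exact ncard_image_add_ncard_le (image_mono hAB) hu _

theorem finite_image_connectedComponentIn {X : Type*} [TopologicalSpace X]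
    [LocallyConnectedSpace X] {K S : Set X} (hK : IsCompact K) (hKS : K ⊆ interior S) :
    (connectedComponentIn S '' K).Finite := by
  obtain ⟨t, -, hcover⟩ := hK.elim_nhds_subcover (connectedComponentIn S)
    fun x hx => connectedComponentIn_mem_nhds (mem_interior_iff_mem_nhds.1 (hKS hx))
  refine (t.finite_toSet.image (connectedComponentIn S)).subset ?_
  rintro _ ⟨y, hy, rfl⟩
  obtain ⟨x, hxt, hyx⟩ := mem_iUnion₂.1 (hcover hy)
  exact ⟨x, hxt, connectedComponentIn_eq hyx⟩

theorem connectedComponentIn_eq_of_subset {X : Type*} [TopologicalSpace X] {S T : Set X}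
    (hST : S ⊆ T) {x y : X} (hy : y ∈ S)
    (h : connectedComponentIn S x = connectedComponentIn S y) :
    connectedComponentIn T x = connectedComponentIn T y :=
  connectedComponentIn_eq <| connectedComponentIn_mono x hST <| h ▸ mem_connectedComponentIn hy

theorem Int.nonempty_and_forall_pos_of_csInf_pos {T : Set ℤ} (h : 0 < sInf T) :
    T.Nonempty ∧ ∀ z ∈ T, 0 < z := by
  have hne : T.Nonempty := nonempty_iff_ne_empty.2 fun hT => by simp [hT] at h
  have hbdd : BddBelow T := by
    by_contra hT
    rw [Int.csInf_of_not_bddBelow hT] at h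
    exact h.false
  exact ⟨hne, fun z hz => h.trans_le (csInf_le hbdd hz)⟩

section SizeFunction

variable {M : Type*} [TopologicalSpace M] {φ : M → ℝ}

theorem rsf_eq_ncard_image (x y : ℝ) :
    rsf φ x y = (connectedComponentIn {Q | φ Q ≤ y} '' {P | φ P ≤ x}).ncard := by
  simp only [rsf, image, mem_ofPred_eq, eq_comm]

theorem rsf_congr_left {x x' : ℝ} (h : {P | φ P ≤ x} = {P | φ P ≤ x'}) (y : ℝ) :
    rsf φ x y = rsf φ x' y := by
  rw [rsf_eq_ncard_image, h, rsf_eq_ncard_image]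

theorem rsf_congr_right {y y' : ℝ} (h : {P | φ P ≤ y} = {P | φ P ≤ y'}) (x : ℝ) :
    rsf φ x y = rsf φ x y' := by
  rw [rsf_eq_ncard_image, h, rsf_eq_ncard_image]

theorem lt_of_mult_pos {x y : ℝ} (h : 0 < mult φ (x, y)) : x < y := by
  obtain ⟨-, e, he, hxy, -⟩ := (Int.nonempty_and_forall_pos_of_csInf_pos h).1
  dsimp only at hxy
  linarith

theorem eventually_rsf_add_lt_of_mult_pos {x y : ℝ} (h : 0 < mult φ (x, y)) :
    ∀ᶠ e in 𝓝[>] 0, (rsf φ (x - e) (y - e) : ℤ) + rsf φ (x + e) (y + e)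
      < rsf φ (x + e) (y - e) + rsf φ (x - e) (y + e) := by
  filter_upwards [Ioo_mem_nhdsGT (half_pos (sub_pos.2 (lt_of_mult_pos h)))] with e ⟨he, hey⟩
  have := (Int.nonempty_and_forall_pos_of_csInf_pos h).2 _ ⟨e, he, by dsimp only; linarith, rfl⟩
  linarith

theorem le_of_forall_le_of_mult_pos {m x y : ℝ} (hm : ∀ P, m ≤ φ P) (h : 0 < mult φ (x, y)) :
    m ≤ x := by
  by_contra! hxm
  obtain ⟨e, hsum, he, hem⟩ :=
    ((eventually_rsf_add_lt_of_mult_pos h).and (Ioo_mem_nhdsGT (sub_pos.2 hxm))).exists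
  have hempty : {P | φ P ≤ x - e} = {P | φ P ≤ x + e} := by
    ext P
    simp only [mem_ofPred_eq]
    constructor <;> intro <;> linarith [hm P]
  rw [rsf_congr_left hempty, rsf_congr_left hempty] at hsum
  omega

theorem le_of_forall_ge_of_mult_pos {m x y : ℝ} (hm : ∀ P, φ P ≤ m) (h : 0 < mult φ (x, y)) :
    y ≤ m := by
  by_contra! hmy
  obtain ⟨e, hsum, he, hem⟩ :=
    ((eventually_rsf_add_lt_of_mult_pos h).and (Ioo_mem_nhdsGT (sub_pos.2 hmy))).exists
  have huniv : {P | φ P ≤ y - e} = {P | φ P ≤ y + e} := by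
    ext P
    simp only [mem_ofPred_eq]
    constructor <;> intro <;> linarith [hm P]
  rw [rsf_congr_right huniv, rsf_congr_right huniv] at hsum
  omega

variable [CompactSpace M] [LocallyConnectedSpace M]

theorem finite_image_connectedComponentIn_sublevel (hφ : Continuous φ) {x y : ℝ} (hxy : x < y) :
    (connectedComponentIn {Q | φ Q ≤ y} '' {P | φ P ≤ x}).Finite := by
  refine finite_image_connectedComponentIn (isClosed_le hφ continuous_const).isCompact ?_
  have hopen : {Q | φ Q < y} ⊆ interior {Q | φ Q ≤ y} :=
    (isOpen_lt hφ continuous_const).subset_interior_iff.2 fun Q (hQ : φ Q < y) => hQ.le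
  exact fun P hP => hopen (lt_of_le_of_lt hP hxy)

theorem rsf_add_rsf_le (hφ : Continuous φ) {a b c d : ℝ} (hab : a ≤ b) (hbc : b < c)
    (hcd : c ≤ d) : rsf φ a c + rsf φ b d ≤ rsf φ b c + rsf φ a d := by
  simp only [rsf_eq_ncard_image]
  have h := ncard_image_add_ncard_image_le (A := {P | φ P ≤ a}) (B := {P | φ P ≤ b})
    (u := connectedComponentIn {Q | φ Q ≤ c}) (v := connectedComponentIn {Q | φ Q ≤ d})
    (fun P (hP : φ P ≤ a) => hP.trans hab)
    (fun P _ Q (hQ : φ Q ≤ b) => connectedComponentIn_eq_of_subset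
      (fun R (hR : φ R ≤ c) => hR.trans hcd) (hQ.trans hbc.le))
    (finite_image_connectedComponentIn_sublevel hφ hbc)
  omega

theorem rsf_mono_left (hφ : Continuous φ) {a b c : ℝ} (hab : a ≤ b) (hbc : b < c) :
    rsf φ a c ≤ rsf φ b c := by
  simp only [rsf_eq_ncard_image]
  exact ncard_le_ncard (image_mono fun P (hP : φ P ≤ a) => hP.trans hab)
    (finite_image_connectedComponentIn_sublevel hφ hbc)

theorem rsf_anti_right (hφ : Continuous φ) {b c d : ℝ} (hbc : b < c) (hcd : c ≤ d) :
    rsf φ b d ≤ rsf φ b c := by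
  simp only [rsf_eq_ncard_image]
  simpa using ncard_image_add_ncard_image_le (A := ∅) (B := {P | φ P ≤ b})
    (u := connectedComponentIn {Q | φ Q ≤ c}) (v := connectedComponentIn {Q | φ Q ≤ d})
    (empty_subset _)
    (fun P _ Q (hQ : φ Q ≤ b) => connectedComponentIn_eq_of_subset
      (fun R (hR : φ R ≤ c) => hR.trans hcd) (hQ.trans hbc.le))
    (finite_image_connectedComponentIn_sublevel hφ hbc)

theorem eventually_rsf_lt_rsf_left_of_mult_pos (hφ : Continuous φ) {x y c : ℝ}
    (h : 0 < mult φ (x, y)) (hxc : x < c) (hcy : c < y) :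
    ∀ᶠ e in 𝓝[>] 0, rsf φ (x - e) c < rsf φ (x + e) c := by
  filter_upwards [eventually_rsf_add_lt_of_mult_pos h,
    Ioo_mem_nhdsGT (lt_min (sub_pos.2 hxc) (sub_pos.2 hcy))] with e hsum ⟨he, hec⟩
  rw [lt_min_iff] at hec
  have hmono := rsf_mono_left hφ (a := x - e) (b := x + e) (c := y + e) (by linarith) (by linarith)
  have hrect := rsf_add_rsf_le hφ (a := x - e) (b := x + e) (c := c) (d := y - e)
    (by linarith) (by linarith) (by linarith)
  omega

theorem eventually_rsf_lt_rsf_right_of_mult_pos (hφ : Continuous φ) {x y b : ℝ}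
    (h : 0 < mult φ (x, y)) (hxb : x < b) (hby : b < y) :
    ∀ᶠ e in 𝓝[>] 0, rsf φ b (y + e) < rsf φ b (y - e) := by
  filter_upwards [eventually_rsf_add_lt_of_mult_pos h,
    Ioo_mem_nhdsGT (lt_min (sub_pos.2 hxb) (sub_pos.2 hby))] with e hsum ⟨he, heb⟩
  rw [lt_min_iff] at heb
  have hanti := rsf_anti_right hφ (b := x - e) (c := y - e) (d := y + e) (by linarith) (by linarith)
  have hrect := rsf_add_rsf_le hφ (a := x + e) (b := b) (c := y - e) (d := y + e)
    (by linarith) (by linarith) (by linarith)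
  omega

end SizeFunction

theorem finite_of_monotoneOn_of_eventually_lt {g : ℝ → ℕ} {b : ℝ} (hg : MonotoneOn g (Iic b))
    {J : Set ℝ} (hJ : J ⊆ Iio b) (hjump : ∀ x ∈ J, ∀ᶠ e in 𝓝[>] 0, g (x - e) < g (x + e)) :
    J.Finite := by
  have hcard : ∀ F : Finset ℝ, ↑F ⊆ J → ∀ y ≤ b, (∀ x ∈ F, x < y) → F.card ≤ g y := by
    intro F
    induction F using Finset.induction_on_max with
    | empty => simp
    | insert a s has ih =>
      intro hsJ y hyb hy
      have hs : ∀ᶠ e in 𝓝[>] (0 : ℝ), ∀ x ∈ s, x < a - e :=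
        (eventually_all_finset s).2 fun x hx => by
          filter_upwards [Ioo_mem_nhdsGT (sub_pos.2 (has x hx))] with e he
          linarith [he.2]
      obtain ⟨e, hjump_e, hs_e, he, hey⟩ := ((hjump a (hsJ (Finset.mem_insert_self a s))).and
        (hs.and (Ioo_mem_nhdsGT (sub_pos.2 (hy a (Finset.mem_insert_self a s)))))).exists
      calc (insert a s).card ≤ s.card + 1 := Finset.card_insert_le a s
        _ ≤ g (a - e) + 1 := by
          gcongr
          exact ih (subset_trans (by simp) hsJ) (a - e) (by linarith) hs_e
        _ ≤ g (a + e) := hjump_e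
        _ ≤ g y := hg (show a + e ≤ b by linarith) hyb (by linarith)
  by_contra hinf
  obtain ⟨F, hFJ, hF⟩ := Set.Infinite.exists_subset_card_eq hinf (g b + 1)
  have := hcard F hFJ b le_rfl fun x hx => hJ (hFJ hx)
  omega

theorem finite_of_antitoneOn_of_eventually_lt {g : ℝ → ℕ} {c : ℝ} (hg : AntitoneOn g (Ici c))
    {J : Set ℝ} (hJ : J ⊆ Ioi c) (hjump : ∀ y ∈ J, ∀ᶠ e in 𝓝[>] 0, g (y + e) < g (y - e)) :
    J.Finite := by
  refine Set.Finite.of_preimage (f := Neg.neg) ?_ neg_surjective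
  refine finite_of_monotoneOn_of_eventually_lt (g := fun s => g (-s)) (b := -c)
    (fun s hs t ht hst => hg (show c ≤ -t from le_neg.2 ht) (show c ≤ -s from le_neg.2 hs)
      (neg_le_neg hst))
    (fun x (hx : -x ∈ J) => show x < -c from lt_neg.2 (hJ hx)) fun x (hx : -x ∈ J) => ?_
  filter_upwards [hjump _ hx] with e he
  rwa [show -(x - e) = -x + e by ring, show -(x + e) = -x - e by ring]

theorem finite_cornerpoints_of_lt {M : Type*} [TopologicalSpace M] [CompactSpace M]
    [LocallyConnectedSpace M] {φ : M → ℝ} (hφ : Continuous φ) {b c : ℝ} (hbc : b < c) :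
    {p : ℝ × ℝ | p.1 < b ∧ c < p.2 ∧ 0 < mult φ p}.Finite := by
  have hfst : {x | x < b ∧ ∃ y, c < y ∧ 0 < mult φ (x, y)}.Finite :=
    finite_of_monotoneOn_of_eventually_lt (g := fun s => rsf φ s c)
      (fun s _ t ht hst => rsf_mono_left hφ hst (lt_of_le_of_lt ht hbc)) (fun x hx => hx.1)
      fun x ⟨hxb, y, hcy, h⟩ => eventually_rsf_lt_rsf_left_of_mult_pos hφ h (hxb.trans hbc) hcy
  have hsnd : {y | c < y ∧ ∃ x, x < b ∧ 0 < mult φ (x, y)}.Finite :=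
    finite_of_antitoneOn_of_eventually_lt (g := fun s => rsf φ b s)
      (fun s hs t _ hst => rsf_anti_right hφ (hbc.trans_le hs) hst) (fun y hy => hy.1)
      fun y ⟨hcy, x, hxb, h⟩ => eventually_rsf_lt_rsf_right_of_mult_pos hφ h hxb (hbc.trans hcy)
  refine (hfst.prod hsnd).subset ?_
  rintro ⟨x, y⟩ ⟨hxb, hcy, h⟩
  exact ⟨⟨hxb, y, hcy, h⟩, hcy, x, hxb, h⟩

theorem local_finiteness_of_cornerpoints_general
    {M : Type*} [TopologicalSpace M] [CompactSpace M] [LocallyConnectedSpace M] {φ : M → ℝ} (hφ : Continuous φ)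
    (ε : ℝ) (hε : 0 < ε) :
    {p : ℝ × ℝ | p.1 + ε < p.2 ∧ 0 < mult φ p}.Finite := by
  obtain ⟨lo, hlo⟩ := (isCompact_range hφ).bddBelow
  obtain ⟨hi, hhi⟩ := (isCompact_range hφ).bddAbove
  set K := Icc lo hi ×ˢ Icc lo hi ∩ {p : ℝ × ℝ | p.1 + ε ≤ p.2}
  have hK : IsCompact K := (isCompact_Icc.prod isCompact_Icc).inter_right
    (isClosed_le (continuous_fst.add continuous_const) continuous_snd)
  have hsubK : {p : ℝ × ℝ | p.1 + ε < p.2 ∧ 0 < mult φ p} ⊆ K := by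
    rintro ⟨x, y⟩ ⟨hxy, h⟩
    have hx := le_of_forall_le_of_mult_pos (fun P => hlo (mem_range_self P)) h
    have hy := le_of_forall_ge_of_mult_pos (fun P => hhi (mem_range_self P)) h
    exact ⟨⟨⟨hx, by linarith⟩, by linarith, hy⟩, hxy.le⟩
  by_contra hinf
  obtain ⟨p, ⟨-, hp : p.1 + ε ≤ p.2⟩, hacc⟩ :=
    Set.Infinite.exists_accPt_of_subset_isCompact hinf hK hsubK
  have hU : Iio (p.1 + ε / 4) ×ˢ Ioi (p.2 - ε / 4) ∈ 𝓝 p :=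
    prod_mem_nhds (Iio_mem_nhds (by linarith)) (Ioi_mem_nhds (by linarith))
  refine Set.Infinite.of_accPt (hacc.nhds_inter hU) ?_
  exact (finite_cornerpoints_of_lt hφ (show p.1 + ε / 4 < p.2 - ε / 4 by linarith)).subset
    fun q ⟨⟨hq1, hq2⟩, _, hq⟩ => ⟨hq1, hq2, hq⟩

theorem local_finiteness_of_cornerpoints
    {M : Type*} [TopologicalSpace M] [CompactSpace M] [ConnectedSpace M] [LocallyConnectedSpace M] [T2Space M] {φ : M → ℝ} (hφ : Continuous φ)
    (ε : ℝ) (hε : 0 < ε) :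
    {p : ℝ × ℝ | p.1 + ε < p.2 ∧ 0 < mult φ p}.Finite :=
  local_finiteness_of_cornerpoints_general hφ ε hε
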